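/- Let K/F be a cyclic field extension with Gal(K/F) = ⟨σ⟩ of order n, R = K[t;σ], and f ∈ R monic irreducible of degree m > 1 with gcrd(f,t) = 1 and minimal central left multiple h(t) = ĥ(tⁿ) of degree km, with B = Nuc_r(S_f) and Ψ: R/Rh ≅ M_k(B), Ψ(a + Rh) = M_a. Then for all a + Rh ∈ R/Rh: dim_B(im(L_{M_a})) = k² − (k/m)·deg(gcrd(a,h)) and colrank(M_a) = k − (1/m)·deg(gcrd(a,h)). In particular, if deg(h) = mn then M_a ∈ M_n(E_ĥ) and rank(M_a) = n − (1/m)·deg(gcrd(a,h)). -/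

import Mathlib

/-!
Through `π`, `M_k(B)` is `R/Rh`, a left `K`-space with basis `1, t, …, t^(deg h - 1)`. The left
ideal `M_k(B) · π a` is the image of `Ra + Rh = Rg`, and `Rg/Rh ≅ R/Rq` for `h = q g`, so it has
`K`-dimension `deg h - deg g`. On the matrix side `K` acts by left multiplication, so `M_k(B)` is
`k` copies of the column space `Bᵏ` and `M_k(B) · M` is `rank M` copies (row rank and column rank
agree over a division ring). Comparing the counts gives `rank (π a) · m = k m - deg g`; the right
ideal `π a · M_k(B)` is `k` copies of the column space of `π a`, which gives the first formula.
-/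

namespace SkewPaper

/-- Data presenting a ring `R` as a skew polynomial ring `D[t;σ]` over a division ring `D`:
`ι` embeds `D`, `t` is the variable, `t * ι a = ι (σ a) * t`, and every element of `R`
is uniquely a finite sum `∑ ι (coeff f i) * t^i`. -/
structure SkewPolyData (D R : Type*) [DivisionRing D] [Ring R] where
  σ : D ≃+* D
  ι : D →+* R
  t : R
  coeff : R → ℕ → D
  twist : ∀ a : D, t * ι a = ι (σ a) * t
  support_finite : ∀ f : R, (Function.support (coeff f)).Finite
  coeff_ext : ∀ f g : R, (∀ i, coeff f i = coeff g i) → f = g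
  coeff_sum : ∀ (c : ℕ →₀ D) (i : ℕ),
    coeff (∑ j ∈ c.support, ι (c j) * t ^ j) i = c i

/-- Two elements are similar if the left modules `R/Rf` and `R/Rg` are isomorphic. -/
def Sim {R : Type*} [Ring R] (f g : R) : Prop :=
  Nonempty ((R ⧸ Submodule.span R {f}) ≃ₗ[R] (R ⧸ Submodule.span R {g}))

/-- `g` divides `f` on the right. -/
def RDvd {R : Type*} [Ring R] (g f : R) : Prop := ∃ q, f = q * g

/-- `g` divides `f` on the left. -/
def LDvd {R : Type*} [Ring R] (g f : R) : Prop := ∃ q, f = g * q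

/-- `Rf` is a two-sided ideal. -/
def RightInvariant {R : Type*} [Ring R] (f : R) : Prop := ∀ r : R, ∃ q, f * r = q * f

/-- `g` is a greatest common right divisor of `a` and `h`. -/
def IsGcrd {R : Type*} [Ring R] (a h g : R) : Prop :=
  RDvd g a ∧ RDvd g h ∧ ∀ g' : R, RDvd g' a → RDvd g' h → RDvd g' g

namespace SkewPolyData

variable {D R : Type*} [DivisionRing D] [Ring R] (S : SkewPolyData D R)

/-- The degree of a skew polynomial (`deg 0 = 0` by convention of `sSup ∅`). -/
noncomputable def deg (f : R) : ℕ := sSup {i | S.coeff f i ≠ 0}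

def Monic (f : R) : Prop := S.coeff f (S.deg f) = 1

/-- constant term -/
def const (f : R) : D := S.coeff f 0

/-- `f` is irreducible: it is not a unit and has no proper factorization. -/
def Irred (f : R) : Prop :=
  ¬ IsUnit f ∧ ¬ ∃ g p : R, 1 ≤ S.deg g ∧ S.deg g < S.deg f ∧
      1 ≤ S.deg p ∧ S.deg p < S.deg f ∧ f = g * p

/-- `f` has a proper factorization. -/
def Reducible (f : R) : Prop :=
  ∃ g p : R, 1 ≤ S.deg g ∧ S.deg g < S.deg f ∧
      1 ≤ S.deg p ∧ S.deg p < S.deg f ∧ f = g * p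

/-- `gcrd(f,t) = 1`: every common right divisor of `f` and `t` is a (degree-0) unit. -/
def CoprimeT (f : R) : Prop := ∀ g : R, RDvd g f → RDvd g S.t → S.deg g = 0

/-- `F = C ∩ Fix(σ)` as a subset of `D`. -/
def Fset : Set D := {a | a ∈ Subring.center D ∧ S.σ a = a}

/-- `σ` has order `n` modulo inner automorphisms, with `σ^n = i_u`, `u` fixed by `σ`. -/
def OrderModInner (n : ℕ) (u : D) : Prop :=
  0 < n ∧ u ≠ 0 ∧ S.σ u = u ∧ (∀ z : D, (⇑S.σ)^[n] z = u * z * u⁻¹) ∧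
  ∀ j : ℕ, 0 < j → j < n → ¬ ∃ w : D, w ≠ 0 ∧ ∀ z : D, (⇑S.σ)^[j] z = w * z * w⁻¹

/-- Evaluation of a commutative polynomial with coefficients in (the image of) `F`
at an element `x` of `R`. -/
noncomputable def evalAt {F : Type*} [Field F] (ιF : F →+* D) (p : Polynomial F) (x : R) : R :=
  p.sum fun i a => S.ι (ιF a) * x ^ i

/-- `h` is the minimal central left multiple of `f`, with `h = ĥ(u⁻¹ tⁿ)` for a monic `ĥ ∈ F[x]`. -/
def IsMclm (n : ℕ) (u : D) {F : Type*} [Field F] (ιF : F →+* D)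
    (f h : R) (hh : Polynomial F) : Prop :=
  h ∈ Subring.center R ∧ hh.Monic ∧
  h = S.evalAt ιF hh (S.ι u⁻¹ * S.t ^ n) ∧ (∃ g, h = g * f) ∧
  ∀ (h' : R) (hh' : Polynomial F), hh' ≠ 0 →
    h' = S.evalAt ιF hh' (S.ι u⁻¹ * S.t ^ n) → (∃ g, h' = g * f) → S.deg h ≤ S.deg h'

/-- `h` factors into `k` irreducible elements of `R`. -/
def FactorsIntoIrred (h : R) (k : ℕ) : Prop :=
  ∃ fs : Fin k → R, (∀ i, S.Irred (fs i)) ∧ h = (List.ofFn fs).prod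

/-- `modr g f` is the remainder of `g` under right division by `f`. -/
def IsModR (modr : R → R → R) : Prop :=
  ∀ g f : R, 1 ≤ S.deg f →
    (∃ q, g = q * f + modr g f) ∧ (modr g f = 0 ∨ S.deg (modr g f) < S.deg f)

/-- The set `A = { d₀ + d₁ t + ⋯ + d_{lm-1} t^{lm-1} + ν ρ(d₀) t^{lm} }`. -/
def ASet (ν : D) (ρ : D ≃+* D) (lm : ℕ) : Set R :=
  {x | ∃ b : R, S.deg b < lm ∧ x = b + S.ι (ν * ρ (S.const b)) * S.t ^ lm}

/-- The twisted multiplication `b ∘ c = (b + ν ρ(b₀) t^{lm}) c  mod_r f`. -/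
def circ (modr : R → R → R) (f : R) (ν : D) (ρ : D ≃+* D) (lm : ℕ) (b c : R) : R :=
  modr ((b + S.ι (ν * ρ (S.const b)) * S.t ^ lm) * c) f

/-- All coefficients of `p` lie in the subfield (image of) `E`. -/
def CoeffsIn {E : Type*} [Field E] (ιE : E →+* D) (p : R) : Prop := ∀ i, ∃ e, ιE e = S.coeff p i

end SkewPolyData

/-- `D` has dimension `d2` over its center. -/
def CentralDim (D : Type*) [DivisionRing D] (d2 : ℕ) : Prop :=
  ∃ bas : Fin d2 → D,
    (∀ x : D, ∃ c : Fin d2 → D, (∀ i, c i ∈ Subring.center D) ∧ x = ∑ i, c i * bas i) ∧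
    (∀ c : Fin d2 → D, (∀ i, c i ∈ Subring.center D) → ∑ i, c i * bas i = 0 → ∀ i, c i = 0)

/-- `Fb` is finite-dimensional as a vector space over the subfield `F'` of `D`. -/
def FinDimOver {D : Type*} [DivisionRing D] (F' Fb : Set D) : Prop :=
  ∃ T : Finset D, ↑T ⊆ Fb ∧ ∀ a ∈ Fb, ∃ c : D → D, (∀ x ∈ T, c x ∈ F') ∧ a = ∑ x ∈ T, c x * x

/-- The column rank of a matrix over a division ring: the rank of the right `B`-module
generated by its columns. -/
noncomputable def colrank {k : ℕ} {B : Type*} [DivisionRing B]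
    (M : Matrix (Fin k) (Fin k) B) : ℕ :=
  Module.finrank Bᵐᵒᵖ (Submodule.span Bᵐᵒᵖ (Set.range fun j : Fin k => fun i : Fin k => M i j))

/-- `D` is presented as the cyclic algebra `(E/C, γ, aC)` of degree `d`, with maximal
subfield `E` embedded by `ιE`, `Gal(E/C) = ⟨γ⟩` and a generator `e` with `e^d = aC`. -/
def IsCyclicPresentation {D : Type*} [DivisionRing D] {C E : Type*} [Field C] [Field E]
    [Algebra C E] (ιE : E →+* D) (γ : E ≃ₐ[C] E) (d : ℕ) (e : D) (aC : C) : Prop :=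
  (∀ a : D, a ∈ Subring.center D ↔ ∃ c : C, ιE (algebraMap C E c) = a) ∧
  Module.finrank C E = d ∧
  (∀ τ : E ≃ₐ[C] E, τ ∈ Subgroup.zpowers γ) ∧
  (∀ z : E, e * ιE z = ιE (γ z) * e) ∧
  e ^ d = ιE (algebraMap C E aC) ∧
  (∀ x : D, ∃ c : Fin d → E, x = ∑ i, ιE (c i) * e ^ (i : ℕ))

/-- Multiplication of matrices with entries representing elements of `B = Nuc_r(S_f)`,
where entries multiply via `a ∘ b = ab mod_r f`. -/
def matmulB {R : Type*} [Ring R] (modr : R → R → R) (f : R) {k : ℕ}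
    (M N : Fin k → Fin k → R) : Fin k → Fin k → R :=
  fun i j => ∑ l, modr (M i l * N l j) f

end SkewPaper

open Module MulOpposite

lemma Submodule.span_range_coe_basis {R V ι : Type*} [Semiring R] [AddCommMonoid V] [Module R V]
    {p : Submodule R V} (b : Basis ι R p) :
    Submodule.span R (Set.range fun i => (b i : V)) = p := by
  rw [show (fun i => (b i : V)) = p.subtype ∘ b from rfl, Set.range_comp, Submodule.span_image,
    b.span_eq, Submodule.map_top, Submodule.range_subtype]

lemma Submodule.finrank_le_card_of_le_span {R V ι : Type*} [DivisionRing R] [AddCommGroup V]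
    [Module R V] [Fintype ι] {p : Submodule R V} {v : ι → V}
    (h : p ≤ Submodule.span R (Set.range v)) : finrank R p ≤ Fintype.card ι :=
  have := Module.Finite.span_of_finite R (Set.finite_range v)
  (Submodule.finrank_mono h).trans (finrank_range_le_card v)

namespace Matrix

variable {B : Type*} [DivisionRing B] {l m n : Type*}

def rowSpace (M : Matrix m n B) : Submodule B (n → B) := Submodule.span B (Set.range fun i => M i)

/-- The right `B`-span of the columns of `M`. -/
def colSpace (M : Matrix m n B) : Submodule Bᵐᵒᵖ (m → B) :=
  Submodule.span Bᵐᵒᵖ (Set.range fun j i => M i j)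

lemma mem_rowSpace_iff [Fintype m] {M : Matrix m n B} {v : n → B} :
    v ∈ rowSpace M ↔ ∃ x, x ᵥ* M = v := by
  rw [rowSpace, Submodule.mem_span_range_iff_exists_fun]
  simp_rw [vecMul_eq_sum]

lemma mem_colSpace_iff [Fintype n] {M : Matrix m n B} {v : m → B} :
    v ∈ colSpace M ↔ ∃ x, M *ᵥ x = v := by
  rw [colSpace, Submodule.mem_span_range_iff_exists_fun]
  simp_rw [mulVec_eq_sum]
  exact ⟨fun ⟨c, hc⟩ => ⟨unop ∘ c, hc⟩, fun ⟨x, hx⟩ => ⟨op ∘ x, hx⟩⟩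

lemma rowSpace_le_of_eq_mul [Fintype l] {M : Matrix m n B} {C : Matrix m l B} {W : Matrix l n B}
    (h : M = C * W) : rowSpace M ≤ rowSpace W :=
  Submodule.span_le.mpr <| by
    rintro _ ⟨i, rfl⟩
    exact mem_rowSpace_iff.mpr ⟨C i, by rw [h]; rfl⟩

lemma colSpace_le_of_eq_mul [Fintype l] {M : Matrix m n B} {C : Matrix m l B} {W : Matrix l n B}
    (h : M = C * W) : colSpace M ≤ colSpace C :=
  Submodule.span_le.mpr <| by
    rintro _ ⟨j, rfl⟩
    exact mem_colSpace_iff.mpr ⟨Wᵀ j, by rw [h]; rfl⟩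

lemma exists_eq_mul_of_rowSpace_le [Fintype l] {M : Matrix m n B} {W : Matrix l n B}
    (h : rowSpace M ≤ rowSpace W) : ∃ C : Matrix m l B, M = C * W := by
  choose C hC using fun i => mem_rowSpace_iff.mp (h (Submodule.subset_span ⟨i, rfl⟩))
  exact ⟨C, funext fun i => (hC i).symm⟩

lemma exists_eq_mul_of_colSpace_le [Fintype l] {M : Matrix m n B} {C : Matrix m l B}
    (h : colSpace M ≤ colSpace C) : ∃ W : Matrix l n B, M = C * W := by
  choose W hW using fun j => mem_colSpace_iff.mp (h (Submodule.subset_span ⟨j, rfl⟩))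
  exact ⟨(of W)ᵀ, transpose_injective (funext fun j => (hW j).symm)⟩

instance [Finite m] (M : Matrix m n B) : FiniteDimensional B (rowSpace M) :=
  FiniteDimensional.span_of_finite B (Set.finite_range _)

instance [Finite n] (M : Matrix m n B) : FiniteDimensional Bᵐᵒᵖ (colSpace M) :=
  FiniteDimensional.span_of_finite Bᵐᵒᵖ (Set.finite_range _)

/-- A basis of either span yields a factorization `M = C * W` through the other side. -/
theorem finrank_rowSpace_eq_finrank_colSpace [Fintype m] [Fintype n] (M : Matrix m n B) :
    finrank B (rowSpace M) = finrank Bᵐᵒᵖ (colSpace M) := by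
  apply le_antisymm
  · let b := Module.finBasis Bᵐᵒᵖ (colSpace M)
    obtain ⟨W, hW⟩ := exists_eq_mul_of_colSpace_le (C := of fun i k => (b k : m → B) i)
      (Submodule.span_range_coe_basis b).ge
    simpa using Submodule.finrank_le_card_of_le_span (rowSpace_le_of_eq_mul hW)
  · let b := Module.finBasis B (rowSpace M)
    obtain ⟨C, hC⟩ := exists_eq_mul_of_rowSpace_le (W := of fun k => (b k : n → B))
      (Submodule.span_range_coe_basis b).ge
    simpa using Submodule.finrank_le_card_of_le_span (colSpace_le_of_eq_mul hC)

lemma finrank_colSpace_le [Fintype n] (M : Matrix m n B) :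
    finrank Bᵐᵒᵖ (colSpace M) ≤ Fintype.card n :=
  Submodule.finrank_le_card_of_le_span le_rfl

theorem finrank_span_range_mul [Fintype n] [Fintype l] (M : Matrix m n B) :
    finrank Bᵐᵒᵖ (Submodule.span Bᵐᵒᵖ (Set.range fun X : Matrix n l B => M * X))
      = Fintype.card l * finrank Bᵐᵒᵖ (colSpace M) := by
  let Ψ : (l → colSpace M) →ₗ[Bᵐᵒᵖ] Matrix m l B :=
    { toFun := fun u => of fun i j => (u j : m → B) i
      map_add' := fun _ _ => rfl
      map_smul' := fun _ _ => rfl }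
  have hΨ : Function.Injective Ψ := fun u v huv =>
    funext fun j => Subtype.ext <| funext fun i => congrFun (congrFun huv i) j
  have hrange : LinearMap.range Ψ
      = Submodule.span Bᵐᵒᵖ (Set.range fun X : Matrix n l B => M * X) := by
    refine le_antisymm ?_ (Submodule.span_le.mpr ?_)
    · rintro _ ⟨u, rfl⟩
      choose x hx using fun j => mem_colSpace_iff.mp (u j).2
      exact Submodule.subset_span ⟨(of x)ᵀ, transpose_injective (funext fun j => hx j)⟩
    · rintro _ ⟨X, rfl⟩
      exact ⟨fun j => ⟨(M * X)ᵀ j, mem_colSpace_iff.mpr ⟨Xᵀ j, rfl⟩⟩, rfl⟩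
  rw [← hrange, LinearMap.finrank_range_of_inj hΨ, finrank_pi_fintype, Finset.sum_const,
    Finset.card_univ, smul_eq_mul]

section RightMul

variable (D : Type*) [DivisionRing D] {P : Type*} [AddCommGroup P] [Module D P]
  [Module Bᵐᵒᵖ P] [SMulCommClass D Bᵐᵒᵖ P]

def rightMul [Fintype m] (W : Matrix m n B) : (m → P) →ₗ[D] (n → P) where
  toFun u j := ∑ k, op (W k j) • u k
  map_add' u v := funext fun j => by simp [Finset.sum_add_distrib]
  map_smul' c u := funext fun j => by simp [Finset.smul_sum, smul_comm c]

lemma rightMul_mul [Fintype l] [Fintype m] (C : Matrix l m B) (W : Matrix m n B) :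
    rightMul D (P := P) (C * W) = (rightMul D W).comp (rightMul D C) := by
  ext u j
  simp only [rightMul, LinearMap.coe_mk, AddHom.coe_mk, LinearMap.comp_apply, mul_apply,
    Finset.op_sum, op_mul, Finset.sum_smul, mul_smul, Finset.smul_sum]
  exact Finset.sum_comm

lemma rightMul_injective [Fintype m] {W : Matrix m n B}
    (hW : LinearIndependent B fun k => W k) : Function.Injective (rightMul D (P := P) W) := by
  rw [← LinearMap.ker_eq_bot, LinearMap.ker_eq_bot']
  intro u hu
  let b := Module.Free.chooseBasis Bᵐᵒᵖ P
  have hcoord : ∀ α k, unop (b.coord α (u k)) = 0 := fun α =>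
    Fintype.linearIndependent_iff.mp hW _ <| funext fun j => by
      have := congrArg (fun v => unop (b.coord α (v j))) hu
      simpa [rightMul, Finset.sum_apply] using this
  funext k
  exact b.ext_elem fun α => by simpa using hcoord α k

lemma range_rightMul_mul_le [Fintype l] [Fintype m] (C : Matrix l m B) (W : Matrix m n B) :
    LinearMap.range (rightMul D (P := P) (C * W)) ≤ LinearMap.range (rightMul D W) := by
  rw [rightMul_mul]
  exact LinearMap.range_comp_le_range _ _

/-- `M` factors through a matrix `W` whose rows are a basis of the row space, and right
multiplication by `W` is injective. -/
theorem finrank_range_rightMul [Fintype m] [Module.Finite D P] (M : Matrix m n B) :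
    finrank D (LinearMap.range (rightMul D (P := P) M)) = finrank B (rowSpace M) * finrank D P := by
  let b := Module.finBasis B (rowSpace M)
  let W : Matrix (Fin (finrank B (rowSpace M))) n B := of fun k => (b k : n → B)
  have hWM : rowSpace W = rowSpace M := Submodule.span_range_coe_basis b
  have hW : LinearIndependent B fun k => W k :=
    b.linearIndependent.map' (rowSpace M).subtype (Submodule.ker_subtype _)
  obtain ⟨C, hC⟩ := exists_eq_mul_of_rowSpace_le hWM.ge
  obtain ⟨V, hV⟩ := exists_eq_mul_of_rowSpace_le hWM.le
  have hrange : LinearMap.range (rightMul D (P := P) M) = LinearMap.range (rightMul D W) := by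
    have hle := range_rightMul_mul_le D (P := P) C W
    have hge := range_rightMul_mul_le D (P := P) V M
    rw [← hC] at hle
    rw [← hV] at hge
    exact hle.antisymm hge
  rw [hrange, LinearMap.finrank_range_of_inj (rightMul_injective D hW), finrank_pi_fintype,
    Finset.sum_const, Finset.card_univ, Fintype.card_fin, smul_eq_mul]

end RightMul

section Columns

variable (D : Type*) [DivisionRing D] [Fintype n] [DecidableEq n] [Module D (Matrix n n B)]
  [Module D (n → B)] [IsScalarTower D (Matrix n n B) (n → B)]

instance smulCommClass_of_isScalarTower : SMulCommClass D Bᵐᵒᵖ (n → B) :=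
  ⟨fun c b v => by rw [← smul_one_smul (Matrix n n B) c, smul_comm, smul_one_smul]⟩

def colsEquiv : Matrix n n B ≃ₗ[D] (n → n → B) where
  toFun X := Xᵀ
  invFun u := (of u)ᵀ
  left_inv := transpose_transpose
  right_inv _ := rfl
  map_add' _ _ := rfl
  map_smul' c X := funext fun j => by
    change (c • X).col j = c • X.col j
    rw [← mulVec_single_one, ← mulVec_single_one, ← smul_eq_mulVec, ← smul_eq_mulVec,
      smul_assoc]

lemma colsEquiv_mul (X M : Matrix n n B) :
    colsEquiv D (X * M) = rightMul D M (colsEquiv D X) :=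
  funext fun _ => mulVec_eq_sum _ _

lemma finite_of_finite_matrix [Nonempty n] [Module.Finite D (Matrix n n B)] :
    Module.Finite D (n → B) :=
  Module.Finite.of_surjective
    ((LinearMap.proj (Classical.arbitrary n)).comp (colsEquiv D).toLinearMap)
    fun v => ⟨(colsEquiv D).symm fun _ => v, by simp⟩

theorem finrank_matrix [Module.Finite D (n → B)] :
    finrank D (Matrix n n B) = Fintype.card n * finrank D (n → B) := by
  rw [(colsEquiv D).finrank_eq, finrank_pi_fintype, Finset.sum_const, Finset.card_univ,
    smul_eq_mul]

theorem finrank_range_mulRight [IsScalarTower D (Matrix n n B) (Matrix n n B)]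
    [Module.Finite D (n → B)] (M : Matrix n n B) :
    finrank D (LinearMap.range (LinearMap.mulRight D M))
      = finrank B (rowSpace M) * finrank D (n → B) := by
  have hconj : LinearMap.mulRight D M
      = (colsEquiv D).symm.toLinearMap ∘ₗ rightMul D M ∘ₗ (colsEquiv D).toLinearMap := by
    ext X : 1
    apply (colsEquiv D).injective
    simp [colsEquiv_mul]
  rw [hconj, LinearMap.range_comp, LinearMap.range_comp_of_range_eq_top _ (LinearEquiv.range _),
    LinearEquiv.finrank_map_eq, finrank_range_rightMul]

end Columns

end Matrix

lemma LinearMap.range_mulRight_le_of_eq_mul {D A : Type*} [Semiring D] [Ring A] [Module D A]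
    [IsScalarTower D A A] {b c u : A} (h : b = u * c) :
    LinearMap.range (LinearMap.mulRight D b) ≤ LinearMap.range (LinearMap.mulRight D c) := by
  rintro _ ⟨X, rfl⟩
  exact ⟨X * u, by simp [h, mul_assoc]⟩

namespace SkewPaper

lemma colrank_eq_finrank_colSpace {k : ℕ} {B : Type*} [DivisionRing B]
    (M : Matrix (Fin k) (Fin k) B) : colrank M = finrank Bᵐᵒᵖ (Matrix.colSpace M) :=
  rfl

namespace SkewPolyData

variable {D R : Type*} [DivisionRing D] [Ring R] (S : SkewPolyData D R)

lemma coeff_sum_monomial (s : Finset ℕ) (c : ℕ → D) (i : ℕ) :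
    S.coeff (∑ j ∈ s, S.ι (c j) * S.t ^ j) i = if i ∈ s then c i else 0 := by
  classical
  set c' : ℕ →₀ D := Finsupp.indicator s fun j _ => c j
  have hc' : ∀ j ∈ s, c' j = c j := fun j hj => Finsupp.indicator_of_mem hj _
  have hsum : ∑ j ∈ s, S.ι (c j) * S.t ^ j = ∑ j ∈ c'.support, S.ι (c' j) * S.t ^ j := by
    refine Eq.trans ?_ (Finsupp.sum_of_support_subset c' (Finsupp.support_indicator_subset _ _)
      (fun j b => S.ι b * S.t ^ j) fun j _ => by simp).symm
    exact Finset.sum_congr rfl fun j hj => by rw [hc' j hj]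
  rw [hsum, S.coeff_sum]
  split_ifs with hi
  · exact hc' i hi
  · exact Finsupp.indicator_of_notMem hi _

@[simp] lemma coeff_zero (i : ℕ) : S.coeff (0 : R) i = 0 := by
  simpa using S.coeff_sum_monomial ∅ 0 i

lemma le_deg_of_coeff_ne_zero {x : R} {i : ℕ} (h : S.coeff x i ≠ 0) : i ≤ S.deg x :=
  le_csSup (S.support_finite x).bddAbove h

lemma coeff_eq_zero_of_deg_lt {x : R} {i : ℕ} (h : S.deg x < i) : S.coeff x i = 0 :=
  not_not.mp fun hi => (S.le_deg_of_coeff_ne_zero hi).not_gt h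

lemma deg_le_of_forall_coeff_eq_zero {x : R} {d : ℕ} (h : ∀ i, d < i → S.coeff x i = 0) :
    S.deg x ≤ d :=
  csSup_le' fun i hi => not_lt.mp fun hdi => hi (h i hdi)

@[simp] lemma deg_zero : S.deg (0 : R) = 0 :=
  Nat.le_zero.mp (S.deg_le_of_forall_coeff_eq_zero fun i _ => S.coeff_zero i)

lemma coeff_deg_ne_zero {x : R} (hx : x ≠ 0) : S.coeff x (S.deg x) ≠ 0 := by
  have hne : {i | S.coeff x i ≠ 0}.Nonempty := by
    by_contra hc
    exact hx (S.coeff_ext x 0 fun i => by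
      simpa using fun hi => hc ⟨i, hi⟩)
  exact Nat.sSup_mem hne (S.support_finite x).bddAbove

lemma eq_sum_monomial {x : R} {s : Finset ℕ} (hs : ∀ i, S.coeff x i ≠ 0 → i ∈ s) :
    x = ∑ i ∈ s, S.ι (S.coeff x i) * S.t ^ i :=
  S.coeff_ext _ _ fun i => by
    rw [S.coeff_sum_monomial]
    split_ifs with hi
    · rfl
    · exact not_not.mp (mt (hs i) hi)

lemma eq_sum_range_monomial {x : R} {N : ℕ} (hx : x = 0 ∨ S.deg x < N) :
    x = ∑ i ∈ Finset.range N, S.ι (S.coeff x i) * S.t ^ i :=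
  S.eq_sum_monomial fun i hi => Finset.mem_range.mpr <| by
    rcases hx with rfl | hx
    · exact absurd (S.coeff_zero i) hi
    · exact (S.le_deg_of_coeff_ne_zero hi).trans_lt hx

lemma coeff_add (x y : R) (i : ℕ) : S.coeff (x + y) i = S.coeff x i + S.coeff y i := by
  set s := Finset.range (max (S.deg x) (S.deg y) + 1)
  have hmem : ∀ z : R, S.deg z ≤ max (S.deg x) (S.deg y) →
      z = ∑ j ∈ s, S.ι (S.coeff z j) * S.t ^ j :=
    fun z hz => S.eq_sum_range_monomial (Or.inr (Nat.lt_succ_of_le hz))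
  rw [hmem x (le_max_left _ _), hmem y (le_max_right _ _), ← Finset.sum_add_distrib]
  simp_rw [← add_mul, ← map_add]
  rw [S.coeff_sum_monomial, S.coeff_sum_monomial, S.coeff_sum_monomial]
  split_ifs <;> simp

lemma coeff_sub (x y : R) (i : ℕ) : S.coeff (x - y) i = S.coeff x i - S.coeff y i := by
  rw [eq_sub_iff_add_eq, ← S.coeff_add, sub_add_cancel]

lemma coeff_finset_sum {ι : Type*} (s : Finset ι) (f : ι → R) (l : ℕ) :
    S.coeff (∑ i ∈ s, f i) l = ∑ i ∈ s, S.coeff (f i) l :=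
  map_sum (AddMonoidHom.mk' (S.coeff · l) fun x y => S.coeff_add x y l) f s

lemma t_pow_mul_ι (d : ℕ) (a : D) : S.t ^ d * S.ι a = S.ι ((S.σ ^ d) a) * S.t ^ d := by
  induction d generalizing a with
  | zero => simp
  | succ d ih =>
    rw [pow_succ, mul_assoc, S.twist, ← mul_assoc, ih, mul_assoc, pow_succ S.σ]
    rfl

lemma monomial_mul_monomial (a b : D) (d e : ℕ) :
    S.ι a * S.t ^ d * (S.ι b * S.t ^ e) = S.ι (a * (S.σ ^ d) b) * S.t ^ (d + e) := by
  rw [mul_assoc, ← mul_assoc (S.t ^ d), S.t_pow_mul_ι, mul_assoc, ← pow_add, ← mul_assoc,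
    ← map_mul]

lemma coeff_monomial (b : D) (e l : ℕ) :
    S.coeff (S.ι b * S.t ^ e) l = if l = e then b else 0 := by
  simpa using S.coeff_sum_monomial {e} (fun _ => b) l

lemma coeff_mul (x y : R) (l : ℕ) :
    S.coeff (x * y) l = ∑ i ∈ Finset.range (S.deg x + 1), ∑ j ∈ Finset.range (S.deg y + 1),
      if l = i + j then S.coeff x i * (S.σ ^ i) (S.coeff y j) else 0 := by
  conv_lhs => rw [S.eq_sum_range_monomial (x := x) (Or.inr (Nat.lt_succ_self _)),
    S.eq_sum_range_monomial (x := y) (Or.inr (Nat.lt_succ_self _))]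
  simp_rw [Finset.sum_mul, Finset.mul_sum, S.monomial_mul_monomial, S.coeff_finset_sum,
    S.coeff_monomial]

lemma coeff_mul_of_deg_add_lt {x y : R} {l : ℕ} (hl : S.deg x + S.deg y < l) :
    S.coeff (x * y) l = 0 := by
  rw [S.coeff_mul]
  refine Finset.sum_eq_zero fun i hi => Finset.sum_eq_zero fun j hj => if_neg ?_
  simp only [Finset.mem_range] at hi hj
  omega

lemma coeff_mul_deg_add_deg (x y : R) :
    S.coeff (x * y) (S.deg x + S.deg y)
      = S.coeff x (S.deg x) * (S.σ ^ S.deg x) (S.coeff y (S.deg y)) := by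
  rw [S.coeff_mul, Finset.sum_eq_single (S.deg x), Finset.sum_eq_single (S.deg y), if_pos rfl]
  · intro j hj hne
    simp only [Finset.mem_range] at hj
    exact if_neg (by omega)
  · simp
  · intro i hi hne
    simp only [Finset.mem_range] at hi
    refine Finset.sum_eq_zero fun j hj => if_neg ?_
    simp only [Finset.mem_range] at hj
    omega
  · simp

lemma coeff_mul_deg_add_deg_ne_zero {x y : R} (hx : x ≠ 0) (hy : y ≠ 0) :
    S.coeff (x * y) (S.deg x + S.deg y) ≠ 0 := by
  rw [S.coeff_mul_deg_add_deg]
  exact mul_ne_zero (S.coeff_deg_ne_zero hx) ((map_ne_zero _).mpr (S.coeff_deg_ne_zero hy))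

include S in
lemma mul_ne_zero {x y : R} (hx : x ≠ 0) (hy : y ≠ 0) : x * y ≠ 0 := fun hxy =>
  S.coeff_mul_deg_add_deg_ne_zero hx hy (by rw [hxy, S.coeff_zero])

lemma deg_mul {x y : R} (hx : x ≠ 0) (hy : y ≠ 0) : S.deg (x * y) = S.deg x + S.deg y :=
  (S.deg_le_of_forall_coeff_eq_zero fun _ => S.coeff_mul_of_deg_add_lt).antisymm
    (S.le_deg_of_coeff_ne_zero (S.coeff_mul_deg_add_deg_ne_zero hx hy))

include S in
lemma mul_right_cancel {x y g : R} (hg : g ≠ 0) (h : x * g = y * g) : x = y :=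
  sub_eq_zero.mp <| not_not.mp fun hxy => S.mul_ne_zero hxy hg (by rw [sub_mul, h, sub_self])

lemma eq_zero_or_deg_lt {y : R} {d : ℕ} (h : ∀ l, d ≤ l → S.coeff y l = 0) :
    y = 0 ∨ S.deg y < d := by
  by_contra! hy
  exact S.coeff_deg_ne_zero hy.1 (h _ hy.2)

lemma deg_monomial {a : D} (ha : a ≠ 0) (e : ℕ) : S.deg (S.ι a * S.t ^ e) = e := by
  refine (S.deg_le_of_forall_coeff_eq_zero fun l hl => ?_).antisymm
    (S.le_deg_of_coeff_ne_zero ?_)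
  · rw [S.coeff_monomial, if_neg hl.ne']
  · rwa [S.coeff_monomial, if_pos rfl]

lemma exists_sub_mul_eq_zero_or_deg_lt {x g : R} (hg : g ≠ 0) (hx : x ≠ 0)
    (hgx : S.deg g ≤ S.deg x) : ∃ q, x - q * g = 0 ∨ S.deg (x - q * g) < S.deg x := by
  set e := S.deg x - S.deg g
  have hlc : (S.σ ^ e) (S.coeff g (S.deg g)) ≠ 0 :=
    (map_ne_zero _).mpr (S.coeff_deg_ne_zero hg)
  set a := S.coeff x (S.deg x) * ((S.σ ^ e) (S.coeff g (S.deg g)))⁻¹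
  have ha : a ≠ 0 := _root_.mul_ne_zero (S.coeff_deg_ne_zero hx) (inv_ne_zero hlc)
  have hdeg : S.deg (S.ι a * S.t ^ e) + S.deg g = S.deg x := by
    rw [S.deg_monomial ha]
    omega
  refine ⟨S.ι a * S.t ^ e, S.eq_zero_or_deg_lt fun l hl => ?_⟩
  rw [S.coeff_sub]
  rcases hl.eq_or_lt with rfl | hlt
  · rw [sub_eq_zero]
    conv_rhs => rw [← hdeg]
    rw [S.coeff_mul_deg_add_deg, S.deg_monomial ha, S.coeff_monomial, if_pos rfl,
      inv_mul_cancel_right₀ hlc]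
  · rw [S.coeff_eq_zero_of_deg_lt hlt, S.coeff_mul_of_deg_add_lt (hdeg.trans_lt hlt), sub_self]

lemma exists_eq_mul_add {g : R} (hg : g ≠ 0) (x : R) :
    ∃ q r : R, x = q * g + r ∧ (r = 0 ∨ S.deg r < S.deg g) := by
  induction hd : S.deg x using Nat.strong_induction_on generalizing x with
  | _ d ih =>
    by_cases hsmall : x = 0 ∨ S.deg x < S.deg g
    · exact ⟨0, x, by rw [zero_mul, zero_add], hsmall⟩
    push Not at hsmall
    obtain ⟨q₁, hq₁⟩ := S.exists_sub_mul_eq_zero_or_deg_lt hg hsmall.1 hsmall.2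
    rcases hq₁ with h0 | hlt
    · exact ⟨q₁, 0, by rw [add_zero, ← sub_eq_zero, h0], Or.inl rfl⟩
    · obtain ⟨q, r, hqr, hr⟩ := ih _ (hd ▸ hlt) (x - q₁ * g) rfl
      exact ⟨q₁ + q, r, by rw [add_mul, add_assoc, ← hqr, add_sub_cancel], hr⟩

include S in
theorem isPrincipalIdealRing : IsPrincipalIdealRing R := by
  classical
  refine ⟨fun I => ?_⟩
  by_cases hI : I = ⊥
  · exact hI ▸ bot_isPrincipal
  have hex : ∃ d, ∃ z ∈ I, z ≠ 0 ∧ S.deg z = d :=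
    let ⟨z, hz, hz0⟩ := Submodule.exists_mem_ne_zero_of_ne_bot hI
    ⟨_, z, hz, hz0, rfl⟩
  obtain ⟨g, hgI, hg0, hgdeg⟩ := Nat.find_spec hex
  refine ⟨g, le_antisymm (fun z hz => ?_)
    (Submodule.span_le.mpr (Set.singleton_subset_iff.mpr hgI))⟩
  obtain ⟨q, r, rfl, hr⟩ := S.exists_eq_mul_add hg0 z
  have hrI : r ∈ I := by simpa using I.sub_mem hz (I.mul_mem_left q hgI)
  have hr0 : r = 0 := by
    by_contra hr0
    have := Nat.find_min' hex ⟨r, hrI, hr0, rfl⟩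
    have := hr.resolve_left hr0
    omega
  exact Ideal.mem_span_singleton'.mpr ⟨q, by rw [hr0, add_zero]⟩

include S in
lemma exists_eq_mul_add_mul_of_isGcrd {a h g : R} (hg : IsGcrd a h g) :
    ∃ x y, g = x * a + y * h := by
  have := S.isPrincipalIdealRing
  obtain ⟨g₀, hg₀⟩ := Submodule.IsPrincipal.principal (Ideal.span {a, h})
  have hdvd : ∀ z ∈ Ideal.span {a, h}, RDvd g₀ z := fun z hz => by
    obtain ⟨c, hc⟩ := Ideal.mem_span_singleton'.mp (hg₀ ▸ hz)
    exact ⟨c, hc.symm⟩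
  obtain ⟨c, rfl⟩ := hg.2.2 g₀ (hdvd a (Ideal.subset_span (by simp)))
    (hdvd h (Ideal.subset_span (by simp)))
  obtain ⟨x, y, hxy⟩ := Ideal.mem_span_pair.mp
    ((Ideal.span {a, h}).mul_mem_left c (hg₀ ▸ Submodule.mem_span_singleton_self g₀))
  exact ⟨x, y, hxy.symm⟩

lemma coeff_sum_fin_monomial {N : ℕ} (c : Fin N → D) (l : ℕ) :
    S.coeff (∑ i : Fin N, S.ι (c i) * S.t ^ (i : ℕ)) l
      = if h : l < N then c ⟨l, h⟩ else 0 := by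
  rw [S.coeff_finset_sum]
  simp_rw [S.coeff_monomial]
  split_ifs with hl
  · rw [Finset.sum_eq_single ⟨l, hl⟩ (fun i _ hi => if_neg fun h => hi (Fin.ext h.symm))
      (by simp), if_pos rfl]
  · exact Finset.sum_eq_zero fun i _ => if_neg fun h : l = i => hl (h ▸ i.2)

lemma eq_zero_of_sum_monomial_eq_mul {N : ℕ} {c : Fin N → D} {y w : R} (hw : w ≠ 0)
    (hN : N ≤ S.deg w) (h : ∑ i : Fin N, S.ι (c i) * S.t ^ (i : ℕ) = y * w) : c = 0 := by
  have hy : y = 0 := by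
    by_contra hy
    apply S.coeff_mul_deg_add_deg_ne_zero hy hw
    rw [← h, S.coeff_sum_fin_monomial, dif_neg (by omega)]
  funext i
  simpa [hy] using (S.coeff_sum_fin_monomial c i).symm.trans (congrArg (S.coeff · i) h)

section Quotient

variable {A : Type*} [Ring A] [Module D A] [IsScalarTower D A A] {π : R →+* A}
  (hπ : ∀ c, π (S.ι c) = c • (1 : A))

include hπ

lemma map_sum_monomial_mul {N : ℕ} (c : Fin N → D) (g : R) :
    π ((∑ i : Fin N, S.ι (c i) * S.t ^ (i : ℕ)) * g)
      = ∑ i, c i • π (S.t ^ (i : ℕ) * g) := by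
  simp_rw [Finset.sum_mul, map_sum, mul_assoc, map_mul _ (S.ι _), hπ, smul_one_mul]

variable {h : R} (hker : ∀ x, π x = 0 ↔ ∃ c, x = c * h)

include hker

lemma linearIndependent_map_t_pow_mul {q g : R} (hqg : h = q * g) (hq : q ≠ 0) (hg : g ≠ 0) :
    LinearIndependent D fun i : Fin (S.deg q) => π (S.t ^ (i : ℕ) * g) := by
  rw [Fintype.linearIndependent_iff]
  intro c hc
  obtain ⟨y, hy⟩ := (hker _).mp ((S.map_sum_monomial_mul hπ c g).trans hc)
  rw [hqg, ← mul_assoc] at hy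
  exact congrFun (S.eq_zero_of_sum_monomial_eq_mul hq le_rfl (S.mul_right_cancel hg hy))

lemma span_map_t_pow_mul_eq_range (hsurj : Function.Surjective π) {q g : R} (hqg : h = q * g)
    (hq : q ≠ 0) :
    Submodule.span D (Set.range fun i : Fin (S.deg q) => π (S.t ^ (i : ℕ) * g))
      = LinearMap.range (LinearMap.mulRight D (π g)) := by
  refine le_antisymm (Submodule.span_le.mpr ?_) ?_
  · rintro _ ⟨i, rfl⟩
    exact ⟨π (S.t ^ (i : ℕ)), by simp⟩
  · rintro _ ⟨X, rfl⟩
    obtain ⟨x, rfl⟩ := hsurj X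
    obtain ⟨s, d, rfl, hd⟩ := S.exists_eq_mul_add hq x
    have hπh : π h = 0 := (hker h).mpr ⟨1, (one_mul h).symm⟩
    have hxg : π ((s * q + d) * g) = π (d * g) := by
      rw [add_mul, mul_assoc, ← hqg, map_add, map_mul, hπh, mul_zero, zero_add]
    rw [LinearMap.mulRight_apply, ← map_mul, hxg, S.eq_sum_range_monomial hd,
      ← Fin.sum_univ_eq_sum_range (fun i => S.ι (S.coeff d i) * S.t ^ i),
      S.map_sum_monomial_mul hπ]
    exact Submodule.sum_mem _ fun i _ => Submodule.smul_mem _ _ (Submodule.subset_span ⟨i, rfl⟩)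

lemma finrank_range_mulRight_map_eq_deg (hsurj : Function.Surjective π) {q g : R}
    (hqg : h = q * g) (hq : q ≠ 0) (hg : g ≠ 0) :
    Module.finrank D (LinearMap.range (LinearMap.mulRight D (π g))) = S.deg q := by
  rw [← S.span_map_t_pow_mul_eq_range hπ hker hsurj hqg hq,
    finrank_span_eq_card (S.linearIndependent_map_t_pow_mul hπ hker hqg hq hg), Fintype.card_fin]

/-- The images of `1, t, …, t^(deg h - 1)` form a `D`-basis of `A ≅ R/Rh`. -/
noncomputable def basisOfKer (hsurj : Function.Surjective π) (hh : h ≠ 0) :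
    Basis (Fin (S.deg h)) D A :=
  have := nontrivial_of_ne h 0 hh
  Basis.mk (S.linearIndependent_map_t_pow_mul hπ hker (mul_one h).symm hh one_ne_zero) <| by
    rw [S.span_map_t_pow_mul_eq_range hπ hker hsurj (mul_one h).symm hh, map_one,
      LinearMap.mulRight_one, LinearMap.range_id]

lemma finrank_range_mulRight_add_deg (hsurj : Function.Surjective π) (hh : h ≠ 0)
    {a g : R} (hgcrd : IsGcrd a h g) :
    Module.finrank D (LinearMap.range (LinearMap.mulRight D (π a))) + S.deg g = S.deg h := by
  obtain ⟨qa, rfl⟩ := hgcrd.1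
  obtain ⟨q, hqg⟩ := hgcrd.2.1
  obtain ⟨x, y, hxy⟩ := S.exists_eq_mul_add_mul_of_isGcrd hgcrd
  have hq : q ≠ 0 := by rintro rfl; exact hh (by rw [hqg, zero_mul])
  have hg : g ≠ 0 := by rintro rfl; exact hh (by rw [hqg, mul_zero])
  have hπh : π h = 0 := (hker h).mpr ⟨1, (one_mul h).symm⟩
  have hrange : LinearMap.range (LinearMap.mulRight D (π (qa * g)))
      = LinearMap.range (LinearMap.mulRight D (π g)) := by
    refine le_antisymm (LinearMap.range_mulRight_le_of_eq_mul (map_mul π qa g))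
      (LinearMap.range_mulRight_le_of_eq_mul (u := π x) ?_)
    rw [← map_mul, ← add_zero (π (x * _)), ← mul_zero (π y), ← hπh, ← map_mul, ← map_add,
      ← hxy]
  rw [hrange, S.finrank_range_mulRight_map_eq_deg hπ hker hsurj hqg hq hg, hqg, S.deg_mul hq hg]

end Quotient

/-- As left `D`-spaces via `π ∘ ι`, `M_k(B)` and the left ideal `M_k(B) · π a = π(R g)` are sums
of `k`, resp. `colrank (π a)`, copies of the column space `Bᵏ`; their dimensions are `deg h` and
`deg h - deg g`. -/
theorem colrank_mul_deg_add_mul_deg {k : ℕ} {B : Type*} [DivisionRing B]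
    {π : R →+* Matrix (Fin k) (Fin k) B} {h : R} (hk : 0 < k) (hh : h ≠ 0)
    (hker : ∀ x, π x = 0 ↔ ∃ c, x = c * h) (hsurj : Function.Surjective π) {a g : R}
    (hg : IsGcrd a h g) :
    colrank (π a) * S.deg h + k * S.deg g = k * S.deg h := by
  let _ : Module D (Matrix (Fin k) (Fin k) B) := Module.compHom _ (π.comp S.ι)
  let _ : Module D (Fin k → B) := Module.compHom _ (π.comp S.ι)
  have : IsScalarTower D (Matrix (Fin k) (Fin k) B) (Matrix (Fin k) (Fin k) B) :=
    ⟨fun _ _ _ => Matrix.mul_assoc _ _ _⟩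
  have : IsScalarTower D (Matrix (Fin k) (Fin k) B) (Fin k → B) :=
    ⟨fun _ _ _ => (Matrix.mulVec_mulVec _ _ _).symm⟩
  have hπ : ∀ c, π (S.ι c) = c • (1 : Matrix (Fin k) (Fin k) B) := fun c => (mul_one _).symm
  let b := S.basisOfKer hπ hker hsurj hh
  have : Module.Finite D (Matrix (Fin k) (Fin k) B) := Module.Finite.of_basis b
  have : Nonempty (Fin k) := ⟨⟨0, hk⟩⟩
  have : Module.Finite D (Fin k → B) := Matrix.finite_of_finite_matrix D
  have hV : k * finrank D (Fin k → B) = S.deg h := by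
    have := Matrix.finrank_matrix D (n := Fin k) (B := B)
    rw [Fintype.card_fin] at this
    rw [← this, finrank_eq_card_basis b, Fintype.card_fin]
  have hI : colrank (π a) * finrank D (Fin k → B) + S.deg g = S.deg h := by
    rw [← S.finrank_range_mulRight_add_deg hπ hker hsurj hh hg, Matrix.finrank_range_mulRight,
      Matrix.finrank_rowSpace_eq_finrank_colSpace]
    rfl
  calc colrank (π a) * S.deg h + k * S.deg g
      = k * (colrank (π a) * finrank D (Fin k → B) + S.deg g) := by rw [← hV]; ring
    _ = k * S.deg h := by rw [hI]

end SkewPolyData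

end SkewPaper

open SkewPaper

theorem colrank_eq_k_sub_deg_gcrd_div_m_field_case_general
    {K Rg : Type*} [Field K]
    (n : ℕ)
    [Ring Rg] (S : SkewPolyData K Rg)
    (m : ℕ) (hm : 1 < m)
    (h : Rg)
    (k : ℕ) (hdegh : S.deg h = k * m)
    (B : Type*) [DivisionRing B] (π : Rg →+* Matrix (Fin k) (Fin k) B)
    (hker : ∀ x : Rg, π x = 0 ↔ ∃ c, x = c * h) (hsurj : Function.Surjective π) :
    (S.deg h = m * n → k = n) ∧
    ∀ a g : Rg, IsGcrd a h g →
      Module.finrank Bᵐᵒᵖ (Submodule.span Bᵐᵒᵖ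
          (Set.range fun X : Matrix (Fin k) (Fin k) B => π a * X))
        = k ^ 2 - k * S.deg g / m ∧
      colrank (π a) = k - S.deg g / m := by
  refine ⟨fun hmn => Nat.eq_of_mul_eq_mul_right (by omega) (hdegh.symm.trans (hmn.trans
    (mul_comm m n))), fun a g hg => ?_⟩
  rw [Matrix.finrank_span_range_mul, Fintype.card_fin, ← colrank_eq_finrank_colSpace]
  have hc : colrank (π a) ≤ k := by
    simpa [colrank_eq_finrank_colSpace] using Matrix.finrank_colSpace_le (π a)
  rcases Nat.eq_zero_or_pos k with rfl | hk
  · simp [Nat.le_zero.mp hc]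
  have hh : h ≠ 0 := fun h0 => by
    rw [h0, S.deg_zero] at hdegh
    exact (Nat.mul_pos hk (by omega)).ne' hdegh.symm
  have hcount := S.colrank_mul_deg_add_mul_deg hk hh hker hsurj hg
  rw [hdegh] at hcount
  have hdeg : S.deg g = (k - colrank (π a)) * m := by
    have : colrank (π a) * m + S.deg g = k * m :=
      Nat.eq_of_mul_eq_mul_left hk (by linarith)
    rw [Nat.sub_mul]
    omega
  have hsq : k * (k - colrank (π a)) + k * colrank (π a) = k ^ 2 := by
    rw [← mul_add, Nat.sub_add_cancel hc, sq]
  rw [hdeg, ← mul_assoc, Nat.mul_div_cancel _ (by omega), Nat.mul_div_cancel _ (by omega)]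
  omega

/-- Let `K/F` be a cyclic field extension with `Gal(K/F) = ⟨σ⟩` of order
`n`, `R = K[t;σ]`, and `f ∈ R` monic irreducible of degree `m > 1` with `gcrd(f,t) = 1` and
minimal central left multiple `h(t) = ĥ(tⁿ)` of degree `km`, with `B = Nuc_r(S_f)` and
`Ψ : R/Rh ≅ M_k(B)` (presented as a surjective ring homomorphism `π` with kernel `Rh`),
`Ψ(a + Rh) = M_a`. Then for all `a + Rh ∈ R/Rh`:
`dim_B(im(L_{M_a})) = k² − (k/m)·deg(gcrd(a,h))` and
`colrank(M_a) = k − (1/m)·deg(gcrd(a,h))`. In particular, if `deg(h) = mn` then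
`M_a ∈ M_n(E_ĥ)` and `rank(M_a) = n − (1/m)·deg(gcrd(a,h))`. -/
theorem colrank_eq_k_sub_deg_gcrd_div_m_field_case
    {F K Rg : Type*} [Field F] [Field K] [Algebra F K] [IsGalois F K] [FiniteDimensional F K]
    (n : ℕ) (hn : Module.finrank F K = n)
    (σg : K ≃ₐ[F] K) (hgen : ∀ τ : K ≃ₐ[F] K, τ ∈ Subgroup.zpowers σg) (hordσ : orderOf σg = n)
    [Ring Rg] (S : SkewPolyData K Rg) (hσ : ∀ a : K, S.σ a = σg a)
    (f : Rg) (m : ℕ) (hm : 1 < m) (hdegf : S.deg f = m) (hmonic : S.Monic f)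
    (hirr : S.Irred f) (hcop : S.CoprimeT f)
    (h : Rg) (hh : Polynomial F) (hmclm : S.IsMclm n 1 (algebraMap F K) f h hh)
    (k : ℕ) (hk : S.FactorsIntoIrred h k) (hdegh : S.deg h = k * m)
    (B : Type*) [DivisionRing B] (π : Rg →+* Matrix (Fin k) (Fin k) B)
    (hker : ∀ x : Rg, π x = 0 ↔ ∃ c, x = c * h) (hsurj : Function.Surjective π) :
    (S.deg h = m * n → k = n) ∧
    ∀ a g : Rg, IsGcrd a h g →
      Module.finrank Bᵐᵒᵖ (Submodule.span Bᵐᵒᵖ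
          (Set.range fun X : Matrix (Fin k) (Fin k) B => π a * X))
        = k ^ 2 - k * S.deg g / m ∧
      colrank (π a) = k - S.deg g / m :=
  colrank_eq_k_sub_deg_gcrd_div_m_field_case_general n S m hm h k hdegh B π hker hsurj
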